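/- Suppose G is a connected graph with spanning tree T admitting an acyclic charging scheme of value v. Then for any ε > 0 and any nonnegative edge weights on G, the greedy spanner algorithm (forcing the edges of T) outputs a (1+ε)-spanner G' containing T with w(G') ≤ (1 + v/ε)·w(T). -/

import Mathlib

open scoped Classical
noncomputable section

/-- Weighted length of a walk: sum of edge weights with multiplicity. -/
def wlen {V : Type*} (w : Sym2 V → ℝ) {G : SimpleGraph V} {u v : V}
    (p : G.Walk u v) : ℝ :=
  (p.edges.map w).sum

/-- Weighted shortest-path distance: infimum of weighted lengths of walks. -/
def wdist {V : Type*} (G : SimpleGraph V) (w : Sym2 V → ℝ) (u v : V) : ℝ :=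
  sInf {x : ℝ | ∃ p : G.Walk u v, wlen w p = x}

/-- Total weight of a graph: sum of weights over its edge set. -/
def totalWeight {V : Type*} (G : SimpleGraph V) (w : Sym2 V → ℝ) : ℝ :=
  ∑ᶠ e ∈ G.edgeSet, w e

/-- `T` is a spanning tree of `G`. -/
def IsSpanningTree {V : Type*} (G T : SimpleGraph V) : Prop :=
  T ≤ G ∧ T.IsTree

/-- A detour in `G`: an edge `{u,v}` together with a path `P` from `v` to `u`
such that `e + P` is a simple cycle. -/
structure Detour {V : Type*} (G : SimpleGraph V) where
  u : V
  v : V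
  adj : G.Adj u v
  path : G.Walk v u
  cyc : (SimpleGraph.Walk.cons adj path).IsCycle

/-- The edge of a detour. -/
def Detour.edge {V : Type*} {G : SimpleGraph V} (d : Detour G) : Sym2 V :=
  s(d.u, d.v)

/-- Total charge going out of edge `e`. -/
def chargeOut {V : Type*} {G : SimpleGraph V} (x : Detour G → ℝ) (e : Sym2 V) : ℝ :=
  ∑ᶠ d ∈ {d : Detour G | d.edge = e}, x d

/-- Total charge coming into edge `e` (as part of detour paths). -/
def chargeIn {V : Type*} {G : SimpleGraph V} (x : Detour G → ℝ) (e : Sym2 V) : ℝ :=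
  ∑ᶠ d ∈ {d : Detour G | e ∈ d.path.edges}, x d

/-- A charging scheme from `G` to `T` of value `v`. -/
def IsChargingScheme {V : Type*} (G T : SimpleGraph V) (v : ℝ)
    (x : Detour G → ℝ) : Prop :=
  (∀ d, 0 ≤ x d) ∧
  (x.support.Finite) ∧
  (∀ e ∈ G.edgeSet, e ∉ T.edgeSet → 1 ≤ chargeOut x e) ∧
  (∀ e ∈ G.edgeSet, e ∉ T.edgeSet → chargeIn x e - chargeOut x e ≤ 0) ∧
  (∀ e ∈ T.edgeSet, chargeIn x e - chargeOut x e ≤ v)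

/-- An acyclic charging scheme: additionally only non-tree edges charge, and
there is an edge ordering in which charging edges precede charged edges. -/
def IsAcyclicScheme {V : Type*} (G T : SimpleGraph V) (v : ℝ)
    (x : Detour G → ℝ) : Prop :=
  IsChargingScheme G T v x ∧
  (∀ d : Detour G, x d ≠ 0 → d.edge ∉ T.edgeSet) ∧
  (∃ ord : Sym2 V → ℕ, ∀ d : Detour G, x d ≠ 0 →
    ∀ e ∈ d.path.edges, ord d.edge < ord e)
/-- One step of the greedy spanner algorithm: add the edge `{p.1, p.2}` iff
`(1+ε)·w(e)` is strictly less than the current distance between its endpoints. -/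
def greedyStep {V : Type*} (ε : ℝ) (w : Sym2 V → ℝ)
    (G' : SimpleGraph V) (p : V × V) : SimpleGraph V :=
  if (1 + ε) * w s(p.1, p.2) < wdist G' w p.1 p.2 then
    G' ⊔ SimpleGraph.fromEdgeSet {s(p.1, p.2)}
  else G'

/-- The greedy spanner algorithm: start from `T` and process the listed edges in
order, adding each edge iff it is not yet `(1+ε)`-approximated. -/
def greedy {V : Type*} (ε : ℝ) (w : Sym2 V → ℝ)
    (T : SimpleGraph V) (l : List (V × V)) : SimpleGraph V :=
  l.foldl (greedyStep ε w) T

/-- `l` lists exactly the edges of `G` not in `T` (each once, in some orientation),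
in non-decreasing order of weight. -/
def IsGreedyInput {V : Type*} (G T : SimpleGraph V) (w : Sym2 V → ℝ)
    (l : List (V × V)) : Prop :=
  (l.map fun p => w s(p.1, p.2)).Pairwise (· ≤ ·) ∧
  (l.map fun p => s(p.1, p.2)).Nodup ∧
  (∀ p ∈ l, G.Adj p.1 p.2 ∧ ¬ T.Adj p.1 p.2) ∧
  (∀ u v : V, G.Adj u v → ¬ T.Adj u v → s(u, v) ∈ l.map fun p => s(p.1, p.2))

/-!
The greedy graph `H` is a `(1+ε)`-spanner because every rejected edge was already
`(1+ε)`-approximated when it was examined. Since edges arrive in non-decreasing weight order,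
`H` also keeps the invariant that every non-tree edge of `H` is `(1+ε)` times shorter than any
other path in `H` between its endpoints: a path through a later edge `f` would have given `f`
a detour of length less than `(1+ε) w(f)`.

For the weight bound, give each edge `e` the potential `μ(e)`, the distance between its
endpoints in `T` plus the edges of `H` not earlier than `e` in the order of the acyclic
scheme. For a detour `(e, P)` carrying charge, the walks realising `μ` along `P` avoid `e`,
so `μ(e) + [e ∈ H] ε w(e) ≤ μ(P)`. Weighting by the charges and summing, the flow
conditions give `ε w(H \ T) ≤ Σ_f (in(f) - out(f)) μ(f) ≤ v w(T)`.
-/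

namespace SimpleGraph.Walk

variable {V : Type*} {G : SimpleGraph V}

lemma exists_eq_append_cons_of_mem_edges {a b : V} {p : G.Walk a b} {e : Sym2 V}
    (he : e ∈ p.edges) :
    ∃ (x y : V) (h : G.Adj x y) (p₁ : G.Walk a x) (p₂ : G.Walk y b),
      s(x, y) = e ∧ p = p₁.append (cons h p₂) := by
  induction p with
  | nil => simp at he
  | @cons a c b h q ih =>
    by_cases hac : e = s(a, c)
    · exact ⟨a, c, h, nil, q, hac.symm, rfl⟩
    · obtain ⟨x, y, hxy, p₁, p₂, rfl, rfl⟩ :=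
        ih (by simpa [hac] using he)
      exact ⟨x, y, hxy, cons h p₁, p₂, rfl, rfl⟩

end SimpleGraph.Walk

open SimpleGraph

section WeightedDistance

variable {V : Type*} {G H : SimpleGraph V} {w : Sym2 V → ℝ} {a b c : V}

@[simp]
lemma wlen_nil : wlen w (Walk.nil : G.Walk a a) = 0 := rfl

@[simp]
lemma wlen_cons (h : G.Adj a b) (p : G.Walk b c) :
    wlen w (Walk.cons h p) = w s(a, b) + wlen w p := by
  simp [wlen]

@[simp]
lemma wlen_append (p : G.Walk a b) (q : G.Walk b c) :
    wlen w (p.append q) = wlen w p + wlen w q := by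
  simp [wlen]

@[simp]
lemma wlen_reverse (p : G.Walk a b) : wlen w p.reverse = wlen w p := by
  simp [wlen, List.sum_reverse]

@[simp]
lemma wlen_transfer (p : G.Walk a b) (hp : ∀ e ∈ p.edges, e ∈ H.edgeSet) :
    wlen w (p.transfer H hp) = wlen w p := by
  simp [wlen, Walk.edges_transfer]

lemma wlen_nonneg (hw : ∀ e, 0 ≤ w e) (p : G.Walk a b) : 0 ≤ wlen w p :=
  List.sum_nonneg (by simpa using fun e _ => hw e)

lemma wlen_bypass_le (hw : ∀ e, 0 ≤ w e) (p : G.Walk a b) : wlen w p.bypass ≤ wlen w p :=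
  (p.edges_bypass_sublist_edges.map w).sum_le_sum (by simpa using fun e _ => hw e)

lemma wdist_comm (a b : V) : wdist G w a b = wdist G w b a := by
  unfold wdist
  congr 1
  ext r
  exact ⟨fun ⟨p, hp⟩ => ⟨p.reverse, by simpa⟩, fun ⟨p, hp⟩ => ⟨p.reverse, by simpa⟩⟩

def edgeDist (G : SimpleGraph V) (w : Sym2 V → ℝ) : Sym2 V → ℝ :=
  Sym2.lift ⟨wdist G w, wdist_comm⟩

@[simp]
lemma edgeDist_mk : edgeDist G w s(a, b) = wdist G w a b := rfl

lemma wdist_eq_of_mk_eq {a' b' : V} (h : s(a, b) = s(a', b')) :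
    wdist G w a b = wdist G w a' b' := by
  rw [← edgeDist_mk, h, edgeDist_mk]

lemma wdist_le_wlen_of_edges_subset (hw : ∀ e, 0 ≤ w e) (p : G.Walk a b)
    (hp : ∀ e ∈ p.edges, e ∈ H.edgeSet) : wdist H w a b ≤ wlen w p :=
  csInf_le ⟨0, by rintro _ ⟨q, rfl⟩; exact wlen_nonneg hw q⟩
    ⟨p.transfer H hp, wlen_transfer p hp⟩

lemma wdist_le_wlen (hw : ∀ e, 0 ≤ w e) (p : G.Walk a b) : wdist G w a b ≤ wlen w p :=
  wdist_le_wlen_of_edges_subset hw p fun _ he => p.edges_subset_edgeSet he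

lemma wdist_le_of_adj (hw : ∀ e, 0 ≤ w e) (h : G.Adj a b) : wdist G w a b ≤ w s(a, b) := by
  simpa using wdist_le_wlen hw (Walk.cons h Walk.nil)

lemma wdist_nonneg (hw : ∀ e, 0 ≤ w e) : 0 ≤ wdist G w a b :=
  Real.sInf_nonneg (by rintro _ ⟨p, rfl⟩; exact wlen_nonneg hw p)

lemma le_wdist (h : G.Reachable a b) {r : ℝ} (hr : ∀ p : G.Walk a b, r ≤ wlen w p) :
    r ≤ wdist G w a b :=
  le_csInf (h.elim fun p => ⟨_, p, rfl⟩) (by rintro _ ⟨p, rfl⟩; exact hr p)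

lemma wdist_anti (hw : ∀ e, 0 ≤ w e) (hGH : G ≤ H) (h : G.Reachable a b) :
    wdist H w a b ≤ wdist G w a b :=
  le_wdist h fun p => wdist_le_wlen_of_edges_subset hw p
    fun _ he => edgeSet_mono hGH (p.edges_subset_edgeSet he)

lemma edgeDist_anti (hw : ∀ e, 0 ≤ w e) (hGH : G ≤ H) (hG : G.Preconnected) (e : Sym2 V) :
    edgeDist H w e ≤ edgeDist G w e := by
  induction e using Sym2.ind with
  | _ a b => exact wdist_anti hw hGH (hG a b)

lemma wdist_triangle (hw : ∀ e, 0 ≤ w e) (hab : G.Reachable a b) (hbc : G.Reachable b c) :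
    wdist G w a c ≤ wdist G w a b + wdist G w b c := by
  have h : ∀ q : G.Walk b c, wdist G w a c - wlen w q ≤ wdist G w a b := fun q =>
    le_wdist hab fun p => by
      have := wdist_le_wlen hw (p.append q)
      rw [wlen_append] at this
      linarith
  have : wdist G w a c - wdist G w a b ≤ wdist G w b c :=
    le_wdist hbc fun q => by linarith [h q]
  linarith

lemma wdist_le_sum_edgeDist (hw : ∀ e, 0 ≤ w e) (hH : H.Preconnected) (p : G.Walk a b) :
    wdist H w a b ≤ (p.edges.map (edgeDist H w)).sum := by
  induction p with
  | nil => simpa using wdist_le_wlen hw (Walk.nil : H.Walk _ _)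
  | @cons a b c _ q ih =>
    simpa using (wdist_triangle hw (hH a b) (hH b c)).trans (by simpa using ih)

lemma wdist_le_mul_wdist (hw : ∀ e, 0 ≤ w e) (hH : H.Preconnected) {t : ℝ} (ht : 0 < t)
    (hedge : ∀ a b, G.Adj a b → wdist H w a b ≤ t * w s(a, b)) (h : G.Reachable a b) :
    wdist H w a b ≤ t * wdist G w a b := by
  rw [mul_comm, ← div_le_iff₀ ht]
  refine le_wdist h fun p => (div_le_iff₀ ht).2 ?_
  have hp : ∀ e ∈ p.edges, edgeDist H w e ≤ t * w e := by
    intro e he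
    induction e using Sym2.ind with
    | _ x y => exact hedge x y (p.adj_of_mem_edges he)
  calc wdist H w a b ≤ (p.edges.map (edgeDist H w)).sum := wdist_le_sum_edgeDist hw hH p
    _ ≤ (p.edges.map fun e => t * w e).sum := List.sum_le_sum hp
    _ = wlen w p * t := by rw [List.sum_map_mul_left, wlen, mul_comm]

end WeightedDistance

section Greedy

variable {V : Type*} {G T A : SimpleGraph V} {w : Sym2 V → ℝ} {ε : ℝ}

lemma le_greedyStep (A : SimpleGraph V) (p : V × V) : A ≤ greedyStep ε w A p := by
  unfold greedyStep
  split_ifs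
  exacts [le_sup_left, le_rfl]

lemma edgeSet_greedyStep_subset (A : SimpleGraph V) (p : V × V) :
    (greedyStep ε w A p).edgeSet ⊆ insert s(p.1, p.2) A.edgeSet := by
  unfold greedyStep
  split_ifs
  · rw [edgeSet_sup, edgeSet_fromEdgeSet]
    rintro e (he | ⟨rfl, -⟩)
    exacts [Set.mem_insert_of_mem _ he, Set.mem_insert _ _]
  · exact Set.subset_insert _ _

lemma le_greedy (A : SimpleGraph V) (l : List (V × V)) : A ≤ greedy ε w A l := by
  induction l generalizing A with
  | nil => exact le_rfl
  | cons p l ih => exact (le_greedyStep A p).trans (ih _)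

lemma greedy_le (hAG : A ≤ G) {l : List (V × V)} (hl : ∀ p ∈ l, G.Adj p.1 p.2) :
    greedy ε w A l ≤ G := by
  induction l generalizing A with
  | nil => exact hAG
  | cons p l ih =>
    refine ih ?_ fun q hq => hl q (List.mem_cons_of_mem _ hq)
    rw [← edgeSet_subset_edgeSet] at hAG ⊢
    refine (edgeSet_greedyStep_subset A p).trans (Set.insert_subset ?_ hAG)
    exact hl p List.mem_cons_self

lemma wdist_greedyStep_le (hw : ∀ e, 0 ≤ w e) (hε : 0 ≤ ε) (A : SimpleGraph V) (p : V × V) :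
    wdist (greedyStep ε w A p) w p.1 p.2 ≤ (1 + ε) * w s(p.1, p.2) := by
  obtain ⟨a, b⟩ := p
  unfold greedyStep
  split_ifs with hadd
  · rcases eq_or_ne a b with rfl | hab
    · exact (wdist_le_wlen hw Walk.nil).trans (by simpa using mul_nonneg (by linarith) (hw _))
    · refine (wdist_le_of_adj hw (by simp [hab])).trans ?_
      nlinarith [hw s(a, b)]
  · exact not_lt.1 hadd

lemma wdist_greedy_le_of_mem (hw : ∀ e, 0 ≤ w e) (hε : 0 ≤ ε) (hA : A.Preconnected)
    {l : List (V × V)} {p : V × V} (hp : p ∈ l) :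
    wdist (greedy ε w A l) w p.1 p.2 ≤ (1 + ε) * w s(p.1, p.2) := by
  induction l generalizing A with
  | nil => simp at hp
  | cons q l ih =>
    have hA' := hA.mono (le_greedyStep (ε := ε) (w := w) A q)
    rcases List.mem_cons.1 hp with rfl | hp
    · exact (wdist_anti hw (le_greedy _ l) (hA' _ _)).trans (wdist_greedyStep_le hw hε A p)
    · exact ih hA' hp

lemma wdist_greedy_le_of_adj (hw : ∀ e, 0 ≤ w e) (hε : 0 ≤ ε) (hT : T.Preconnected)
    {l : List (V × V)} (hl : IsGreedyInput G T w l) {a b : V} (hab : G.Adj a b) :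
    wdist (greedy ε w T l) w a b ≤ (1 + ε) * w s(a, b) := by
  by_cases hTab : T.Adj a b
  · refine (wdist_le_of_adj hw (le_greedy T l hTab)).trans ?_
    nlinarith [hw s(a, b)]
  · obtain ⟨p, hp, hpe⟩ := List.mem_map.1 (hl.2.2.2 a b hab hTab)
    rw [← wdist_eq_of_mk_eq hpe, ← hpe]
    exact wdist_greedy_le_of_mem hw hε hT hp

def EdgesIrredundant (ε : ℝ) (w : Sym2 V → ℝ) (T H : SimpleGraph V) : Prop :=
  ∀ ⦃a b : V⦄ (Q : H.Walk a b), Q.IsPath → s(a, b) ∈ H.edgeSet → s(a, b) ∉ T.edgeSet →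
    s(a, b) ∉ Q.edges → (1 + ε) * w s(a, b) < wlen w Q

lemma edgesIrredundant_self : EdgesIrredundant ε w T T :=
  fun _ _ _ _ he heT _ => absurd he heT

lemma EdgesIrredundant.lt_wlen {H : SimpleGraph V} (h : EdgesIrredundant ε w T H)
    (hw : ∀ e, 0 ≤ w e) {a b : V} (he : s(a, b) ∈ H.edgeSet) (heT : s(a, b) ∉ T.edgeSet)
    (W : H.Walk a b) (heW : s(a, b) ∉ W.edges) : (1 + ε) * w s(a, b) < wlen w W :=
  (h W.bypass W.bypass_isPath he heT fun h' => heW (W.edges_bypass_subset_edges h')).trans_le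
    (wlen_bypass_le hw W)

lemma mul_weight_lt_wlen_add_of_lt_wdist (hw : ∀ e, 0 ≤ w e) (hε : 0 ≤ ε) {a b c d : V}
    (hcd : (1 + ε) * w s(c, d) < wdist A w c d) (hab : A.Adj a b) (hle : w s(a, b) ≤ w s(c, d))
    (Q₁ : A.Walk a c) (Q₂ : A.Walk d b) :
    (1 + ε) * w s(a, b) < wlen w Q₁ + w s(c, d) + wlen w Q₂ := by
  have := wdist_le_wlen hw (Q₁.reverse.append (Walk.cons hab Q₂.reverse))
  simp only [wlen_append, wlen_reverse, wlen_cons] at this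
  nlinarith

lemma EdgesIrredundant.greedyStep (hw : ∀ e, 0 ≤ w e) (hε : 0 ≤ ε)
    (hA : EdgesIrredundant ε w T A) {p : V × V}
    (hle : ∀ e ∈ A.edgeSet, e ∉ T.edgeSet → w e ≤ w s(p.1, p.2)) :
    EdgesIrredundant ε w T (greedyStep ε w A p) := by
  obtain ⟨x, y⟩ := p
  unfold _root_.greedyStep
  split_ifs with hadd
  swap
  · exact hA
  intro a b Q hQ he heT heQ
  have hold : ∀ g ∈ (A ⊔ fromEdgeSet {s(x, y)}).edgeSet, g ≠ s(x, y) → g ∈ A.edgeSet := by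
    intro g hg hgf
    simpa [hgf] using hg
  by_cases hfQ : s(x, y) ∈ Q.edges
  · obtain ⟨c, d, hcd, Q₁, Q₂, hf, rfl⟩ := Q.exists_eq_append_cons_of_mem_edges hfQ
    have hnodup := hQ.isTrail.edges_nodup
    simp only [Walk.edges_append, Walk.edges_cons, List.nodup_append, List.nodup_cons,
      List.mem_cons] at hnodup
    have hQ₁ : ∀ g ∈ Q₁.edges, g ∈ A.edgeSet := fun g hg =>
      hold g (Q₁.edges_subset_edgeSet hg) (hf ▸ hnodup.2.2 g hg _ (Or.inl rfl))
    have hQ₂ : ∀ g ∈ Q₂.edges, g ∈ A.edgeSet := fun g hg =>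
      hold g (Q₂.edges_subset_edgeSet hg) (hf ▸ fun h => hnodup.2.1.1 (h ▸ hg))
    have heA : s(a, b) ∈ A.edgeSet := hold _ he fun h => heQ (by rwa [h])
    have := mul_weight_lt_wlen_add_of_lt_wdist hw hε
      (by rwa [wdist_eq_of_mk_eq hf, hf]) heA (by rw [hf]; exact hle _ heA heT)
      (Q₁.transfer A hQ₁) (Q₂.transfer A hQ₂)
    simpa [add_assoc] using this
  · have hQA : ∀ g ∈ Q.edges, g ∈ A.edgeSet := fun g hg =>
      hold g (Q.edges_subset_edgeSet hg) (ne_of_mem_of_not_mem hg hfQ)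
    by_cases heA : s(a, b) ∈ A.edgeSet
    · simpa using
        hA (Q.transfer A hQA) (hQ.transfer hQA) heA heT (by simpa [Walk.edges_transfer])
    · have hef : s(a, b) = s(x, y) := by
        by_contra hne
        exact heA (hold _ he hne)
      calc (1 + ε) * w s(a, b) = (1 + ε) * w s(x, y) := by rw [hef]
        _ < wdist A w x y := hadd
        _ = wdist A w a b := wdist_eq_of_mk_eq hef.symm
        _ ≤ wlen w Q := wdist_le_wlen_of_edges_subset hw Q hQA

lemma edgesIrredundant_greedy (hw : ∀ e, 0 ≤ w e) (hε : 0 ≤ ε) {l : List (V × V)}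
    (hsorted : (l.map fun p => w s(p.1, p.2)).Pairwise (· ≤ ·)) (hA : EdgesIrredundant ε w T A)
    (hAl : ∀ e ∈ A.edgeSet, e ∉ T.edgeSet → ∀ p ∈ l, w e ≤ w s(p.1, p.2)) :
    EdgesIrredundant ε w T (greedy ε w A l) := by
  induction l generalizing A with
  | nil => exact hA
  | cons p l ih =>
    rw [List.map_cons, List.pairwise_cons] at hsorted
    refine ih hsorted.2 (hA.greedyStep hw hε fun e he heT => hAl e he heT p List.mem_cons_self) ?_
    intro e he heT q hq
    rcases edgeSet_greedyStep_subset A p he with rfl | he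
    · exact hsorted.1 _ (List.mem_map_of_mem hq)
    · exact hAl e he heT q (List.mem_cons_of_mem _ hq)

end Greedy

section Potential

variable {V : Type*} {G T H : SimpleGraph V} {w : Sym2 V → ℝ} {ε : ℝ} {ord : Sym2 V → ℕ}

def lateGraph (T H : SimpleGraph V) (ord : Sym2 V → ℕ) (k : ℕ) : SimpleGraph V :=
  T ⊔ H.deleteEdges {e | ord e < k}

lemma edgeSet_lateGraph (k : ℕ) :
    (lateGraph T H ord k).edgeSet = T.edgeSet ∪ (H.edgeSet \ {e | ord e < k}) := by
  simp [lateGraph]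

lemma le_lateGraph (k : ℕ) : T ≤ lateGraph T H ord k := le_sup_left

lemma lateGraph_le (hTH : T ≤ H) (k : ℕ) : lateGraph T H ord k ≤ H :=
  sup_le hTH (deleteEdges_le _)

lemma lateGraph_anti {k k' : ℕ} (h : k ≤ k') : lateGraph T H ord k' ≤ lateGraph T H ord k :=
  sup_le_sup_left (deleteEdges_anti fun _ (he : _ < k) => he.trans_le h) _

def potential (w : Sym2 V → ℝ) (T H : SimpleGraph V) (ord : Sym2 V → ℕ) (e : Sym2 V) : ℝ :=
  edgeDist (lateGraph T H ord (ord e)) w e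

lemma potential_nonneg (hw : ∀ e, 0 ≤ w e) (e : Sym2 V) : 0 ≤ potential w T H ord e := by
  induction e using Sym2.ind with
  | _ a b => exact wdist_nonneg hw

lemma potential_le (hw : ∀ e, 0 ≤ w e) {e : Sym2 V} (he : e ∈ H.edgeSet) :
    potential w T H ord e ≤ w e := by
  induction e using Sym2.ind with
  | _ a b =>
    refine wdist_le_of_adj hw ?_
    rw [← mem_edgeSet, edgeSet_lateGraph]
    exact Or.inr ⟨he, lt_irrefl (ord s(a, b))⟩

lemma potential_add_le_sum (hw : ∀ e, 0 ≤ w e) (hT : T.Preconnected) (hTH : T ≤ H)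
    (hH : EdgesIrredundant ε w T H) {u v : V} (P : G.Walk v u) (heT : s(u, v) ∉ T.edgeSet)
    (hord : ∀ f ∈ P.edges, ord s(u, v) < ord f) :
    potential w T H ord s(u, v) + (if s(u, v) ∈ H.edgeSet then ε * w s(u, v) else 0) ≤
      (P.edges.map (potential w T H ord)).sum := by
  set K := lateGraph T H ord (ord s(u, v) + 1)
  have hK : K.Preconnected := hT.mono (le_lateGraph _)
  have hP : wdist K w u v ≤ (P.edges.map (potential w T H ord)).sum := by
    -- every `f ∈ P` ranks above `s(u, v)`, so the graph defining its potential lies in `K`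
    rw [wdist_comm]
    exact (wdist_le_sum_edgeDist hw hK P).trans <| List.sum_le_sum fun f hf =>
      edgeDist_anti hw (lateGraph_anti (hord f hf)) (hT.mono (le_lateGraph _)) f
  split_ifs with heH
  · -- `s(u, v) ∉ K`, so every `K`-walk between its endpoints is a detour of it in `H`
    have hKe : ∀ W : K.Walk u v, (1 + ε) * w s(u, v) ≤ wlen w W := by
      intro W
      have hWH : ∀ g ∈ W.edges, g ∈ H.edgeSet := fun g hg =>
        edgeSet_mono (lateGraph_le hTH _) (W.edges_subset_edgeSet hg)
      refine (hH.lt_wlen hw heH heT (W.transfer H hWH) fun h => ?_).le.trans_eq (by simp)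
      have := W.edges_subset_edgeSet (by simpa [Walk.edges_transfer] using h)
      simp [K, edgeSet_lateGraph, heT] at this
    have := potential_le (T := T) (ord := ord) hw heH
    linarith [le_wdist (hK u v) hKe]
  · have := wdist_anti hw (lateGraph_anti (Nat.le_succ _)) (hK u v)
    simp only [potential, edgeDist_mk] at this ⊢
    linarith

end Potential

section Charging

variable {V : Type*} {G T H : SimpleGraph V} {x : Detour G → ℝ} {v ε : ℝ}
  {w : Sym2 V → ℝ}

lemma Detour.path_edges_nodup (d : Detour G) : d.path.edges.Nodup :=
  (List.nodup_cons.1 (by simpa using d.cyc.edges_nodup)).2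

lemma chargeOut_nonneg (hx : ∀ d, 0 ≤ x d) (e : Sym2 V) : 0 ≤ chargeOut x e :=
  finsum_nonneg fun d => finsum_nonneg fun _ => hx d

lemma chargeIn_eq_zero {f : Sym2 V} (hf : f ∉ G.edgeSet) : chargeIn x f = 0 := by
  have : {d : Detour G | f ∈ d.path.edges} = ∅ :=
    Set.eq_empty_of_forall_notMem fun d hd => hf (d.path.edges_subset_edgeSet hd)
  simp [chargeIn, this]

lemma chargeOut_eq_sum (hx : x.support.Finite) (e : Sym2 V) :
    chargeOut x e = ∑ d ∈ hx.toFinset with d.edge = e, x d :=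
  finsum_mem_eq_sum_of_inter_support_eq _ (by ext; simp [and_comm])

lemma chargeIn_eq_sum (hx : x.support.Finite) (f : Sym2 V) :
    chargeIn x f = ∑ d ∈ hx.toFinset with f ∈ d.path.edges, x d :=
  finsum_mem_eq_sum_of_inter_support_eq _ (by ext; simp [and_comm])

variable [Fintype V]

lemma sum_mul_edge_eq_sum_chargeOut (hx : x.support.Finite) (φ : Sym2 V → ℝ) :
    ∑ d ∈ hx.toFinset, x d * φ d.edge = ∑ e, chargeOut x e * φ e := by
  simp_rw [chargeOut_eq_sum hx, Finset.sum_mul, Finset.sum_filter]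
  rw [Finset.sum_comm]
  simp

lemma sum_mul_path_eq_sum_chargeIn (hx : x.support.Finite) (ψ : Sym2 V → ℝ) :
    ∑ d ∈ hx.toFinset, x d * (d.path.edges.map ψ).sum = ∑ f, chargeIn x f * ψ f := by
  simp_rw [chargeIn_eq_sum hx, Finset.sum_mul, Finset.sum_filter]
  rw [Finset.sum_comm]
  refine Finset.sum_congr rfl fun d _ => ?_
  rw [← List.sum_toFinset _ d.path_edges_nodup, Finset.mul_sum, ← Finset.sum_filter]
  exact Finset.sum_congr (by ext; simp) fun _ _ => rfl

lemma totalWeight_eq_sum (H : SimpleGraph V) : totalWeight H w = ∑ e ∈ H.edgeFinset, w e := by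
  rw [totalWeight, ← coe_edgeFinset, finsum_mem_coe_finset]

lemma sum_weight_sdiff_le_sum_chargeOut (hx : IsChargingScheme G T v x) (hε : 0 ≤ ε)
    (hw : ∀ e, 0 ≤ w e) (hHG : H ≤ G) :
    ε * ∑ e ∈ H.edgeFinset \ T.edgeFinset, w e ≤
      ∑ e, chargeOut x e * (if e ∈ H.edgeSet then ε * w e else 0) := by
  rw [Finset.mul_sum]
  refine (Finset.sum_le_sum fun e he => ?_).trans (Finset.sum_le_sum_of_subset_of_nonneg
    (Finset.subset_univ _) fun e _ _ => mul_nonneg (chargeOut_nonneg hx.1 e) ?_)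
  · simp only [Finset.mem_sdiff, mem_edgeFinset] at he
    rw [if_pos he.1]
    exact le_mul_of_one_le_left (mul_nonneg hε (hw e))
      (hx.2.2.1 e (edgeSet_mono hHG he.1) he.2)
  · split_ifs
    exacts [mul_nonneg hε (hw e), le_rfl]

lemma sum_chargeBalance_mul_le (hx : IsChargingScheme G T v x) (hv : 0 ≤ v) {μ : Sym2 V → ℝ}
    (hμ0 : ∀ e, 0 ≤ μ e) (hμT : ∀ e ∈ T.edgeSet, μ e ≤ w e) :
    ∑ f, (chargeIn x f - chargeOut x f) * μ f ≤ v * ∑ e ∈ T.edgeFinset, w e := by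
  obtain ⟨hx0, -, -, hbal, hbalT⟩ := hx
  rw [Finset.mul_sum, ← Finset.sum_filter_add_sum_filter_not Finset.univ (· ∈ T.edgeSet)]
  refine add_le_of_le_of_nonpos ?_ (Finset.sum_nonpos fun f hf => ?_)
  · rw [show T.edgeFinset = Finset.univ.filter (· ∈ T.edgeSet) by ext; simp]
    refine Finset.sum_le_sum fun f hf => ?_
    have hfT := (Finset.mem_filter.1 hf).2
    calc (chargeIn x f - chargeOut x f) * μ f ≤ v * μ f :=
          mul_le_mul_of_nonneg_right (hbalT f hfT) (hμ0 f)
      _ ≤ v * w f := mul_le_mul_of_nonneg_left (hμT f hfT) hv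
  · refine mul_nonpos_of_nonpos_of_nonneg ?_ (hμ0 f)
    by_cases hfG : f ∈ G.edgeSet
    · exact hbal f hfG (Finset.mem_filter.1 hf).2
    · rw [chargeIn_eq_zero hfG]
      linarith [chargeOut_nonneg hx0 f]

theorem totalWeight_le_of_potential (hx : IsChargingScheme G T v x) (hv : 0 ≤ v) (hε : 0 < ε)
    (hw : ∀ e, 0 ≤ w e) (hTH : T ≤ H) (hHG : H ≤ G) {μ : Sym2 V → ℝ} (hμ0 : ∀ e, 0 ≤ μ e)
    (hμT : ∀ e ∈ T.edgeSet, μ e ≤ w e)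
    (hμ : ∀ d, x d ≠ 0 →
      μ d.edge + (if d.edge ∈ H.edgeSet then ε * w d.edge else 0) ≤ (d.path.edges.map μ).sum) :
    totalWeight H w ≤ (1 + v / ε) * totalWeight T w := by
  set c : Sym2 V → ℝ := fun e => if e ∈ H.edgeSet then ε * w e else 0
  have hflow : ∑ e, chargeOut x e * (μ e + c e) ≤ ∑ f, chargeIn x f * μ f := by
    rw [← sum_mul_edge_eq_sum_chargeOut hx.2.1, ← sum_mul_path_eq_sum_chargeIn hx.2.1]
    exact Finset.sum_le_sum fun d hd =>
      mul_le_mul_of_nonneg_left (hμ d (hx.2.1.mem_toFinset.1 hd)) (hx.1 d)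
  have hnew := sum_weight_sdiff_le_sum_chargeOut hx hε.le hw hHG
  have hold := sum_chargeBalance_mul_le hx hv hμ0 hμT
  simp only [mul_add, sub_mul, Finset.sum_add_distrib, Finset.sum_sub_distrib] at hflow hold
  have hsdiff : ∑ e ∈ H.edgeFinset \ T.edgeFinset, w e ≤ v / ε * ∑ e ∈ T.edgeFinset, w e := by
    rw [div_mul_eq_mul_div, le_div_iff₀ hε]
    linarith
  rw [totalWeight_eq_sum, totalWeight_eq_sum, ← Finset.sum_sdiff (edgeFinset_mono hTH)]
  linarith

end Charging

/-- if `G` has a spanning tree `T` admitting an acyclic charging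
scheme of value `v`, then for any `ε > 0` and nonnegative weights the greedy
algorithm (forcing the edges of `T`) outputs a `(1+ε)`-spanner `G'` containing `T`
with `w(G') ≤ (1 + v/ε)·w(T)`. -/
theorem stmt17 {V : Type*} [Fintype V]
    (G T : SimpleGraph V) (v : ℝ) (x : Detour G → ℝ)
    (hconn : G.Connected) (hT : IsSpanningTree G T) (hv : 0 ≤ v)
    (hx : IsAcyclicScheme G T v x)
    (ε : ℝ) (hε : 0 < ε) (w : Sym2 V → ℝ) (hw : ∀ e, 0 ≤ w e)
    (l : List (V × V)) (hl : IsGreedyInput G T w l) :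
    T ≤ greedy ε w T l ∧ greedy ε w T l ≤ G ∧
      (∀ u v' : V,
        wdist (greedy ε w T l) w u v' ≤ (1 + ε) * wdist G w u v') ∧
      totalWeight (greedy ε w T l) w ≤ (1 + v / ε) * totalWeight T w := by
  obtain ⟨hscheme, hcharge, ord, hord⟩ := hx
  have hTc : T.Preconnected := hT.2.connected.preconnected
  have hTH : T ≤ greedy ε w T l := le_greedy T l
  have hHG : greedy ε w T l ≤ G := greedy_le hT.1 fun p hp => (hl.2.2.1 p hp).1
  have hirr : EdgesIrredundant ε w T (greedy ε w T l) :=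
    edgesIrredundant_greedy hw hε.le hl.1 edgesIrredundant_self fun _ he heT => absurd he heT
  refine ⟨hTH, hHG, fun u v' => ?_, ?_⟩
  · exact wdist_le_mul_wdist hw (hTc.mono hTH) (by linarith)
      (fun a b hab => wdist_greedy_le_of_adj hw hε.le hTc hl hab) (hconn.preconnected u v')
  · exact totalWeight_le_of_potential hscheme hv hε hw hTH hHG (potential_nonneg hw)
      (fun e he => potential_le hw (edgeSet_mono hTH he))
      (fun d hd => potential_add_le_sum hw hTc hTH hirr d.path (hcharge d hd) (hord d hd))
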